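/- Let M be a map and let E0 = {s1,s2} be a twisted edge of M whose edge-sides lie in a face F of size 2r. Then the faces of M \ E0 are obtained from the faces of M by replacing F by a face of size 2(r−1), all other faces of M being unchanged. -/

import Mathlib

open Equiv Polynomial

open scoped Classical

noncomputable section

variable {α : Type*}

/-- `f` is a *pairing* of the finite set `S`: an involution of the ambient type which
moves exactly the elements of `S` (i.e., a fixpoint-free involution of `S`, extended by
the identity outside of `S`); the pairs of the pairing are the orbits `{a, f a}`. -/
def IsPairing (S : Finset α) (f : Equiv.Perm α) : Prop :=
  (∀ a, f (f a) = a) ∧ ∀ a, f a ≠ a ↔ a ∈ S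

/-- The pairing `P_{{s₁,s₂}}` obtained from the pairing `f` by removing the elements
`s₁, s₂` : if `{s₁,s₂}` is a pair of `f` it is simply deleted; otherwise the pairs
containing `s₁` and `s₂` are deleted and the partners `f s₁`, `f s₂` are matched
together. -/
def removeP (f : Equiv.Perm α) (s₁ s₂ : α) : Equiv.Perm α :=
  Equiv.swap s₁ s₂ * Equiv.swap s₁ (f s₂) * Equiv.swap s₂ (f s₁) * f

/-- `t` lies in the polygon of `L(b,w)` containing `s`, in *even position* with
respect to `s`: `t` is obtained from `s` by an odd alternating word in the
involutions `b` and `w`. -/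
def EvenPos (b w : Equiv.Perm α) (s t : α) : Prop :=
  ∃ j : ℤ, t = ((w * b) ^ j * b) s

/-- `t` lies in the polygon of `L(b,w)` containing `s`, in *odd position* with respect
to `s`: `t` is obtained from `s` by an even alternating word in the involutions
`b` and `w`. -/
def OddPos (b w : Equiv.Perm α) (s t : α) : Prop :=
  ∃ j : ℤ, t = ((w * b) ^ j) s

/-- `s` and `t` lie in the same polygon of `L(b,w)`. -/
def SameFace (b w : Equiv.Perm α) (s t : α) : Prop :=
  EvenPos b w s t ∨ OddPos b w s t

/-- The edge `{s,t}` is *straight*: both edge-sides lie in the same face,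
in even position. -/
def IsStraight (b w : Equiv.Perm α) (s t : α) : Prop :=
  SameFace b w s t ∧ EvenPos b w s t

/-- The edge `{s,t}` is *twisted*: both edge-sides lie in the same face,
in odd position. -/
def IsTwisted (b w : Equiv.Perm α) (s t : α) : Prop :=
  SameFace b w s t ∧ OddPos b w s t

/-- The edge `{s,t}` is an *interface* edge: its edge-sides lie in two
different faces. -/
def IsInterface (b w : Equiv.Perm α) (s t : α) : Prop :=
  ¬ SameFace b w s t

/-- The polygon (face) of `L(b,w)` containing `s`, as the set of its edge-sides. -/
def faceOf (S : Finset α) (b w : Equiv.Perm α) (s : α) : Finset α :=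
  S.filter (SameFace b w s)

/-- The collection of polygons (faces) of `L(b,w)`. -/
def faces (S : Finset α) (b w : Equiv.Perm α) : Finset (Finset α) :=
  S.image (faceOf S b w)

/-- The number of polygons (faces) of `L(b,w)`. -/
def numFaces (S : Finset α) (b w : Equiv.Perm α) : ℕ :=
  (faces S b w).card

/-- The *type* of the couple of pairings `(b,w)`: the multiset of half-lengths of the
polygons of `L(b,w)`. -/
def faceType (S : Finset α) (b w : Equiv.Perm α) : Multiset ℕ :=
  (faces S b w).val.map fun F => F.card / 2

/-- `s` and `t` lie in the same connected component of the map `(b,w,e)`: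
`t` is obtained from `s` by applying partner maps in `b`, `w`, `e` repeatedly. -/
def SameComponent (b w e : Equiv.Perm α) (s t : α) : Prop :=
  ∃ g ∈ Subgroup.closure ({b, w, e} : Set (Equiv.Perm α)), g s = t

/-- The number of connected components of the map `(S, b, w, e)`. -/
def numComponents (S : Finset α) (b w e : Equiv.Perm α) : ℕ :=
  (S.image fun s => S.filter (SameComponent b w e s)).card

/-- The number of vertices of the map `(S, b, w, e)`: black vertices are the polygons
of `L(b,e)`, white vertices are the polygons of `L(w,e)`. -/
def numVertices (S : Finset α) (b w e : Equiv.Perm α) : ℕ :=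
  numFaces S b e + numFaces S w e

/-- The number of edges of a map with edge-side set `S`. -/
def numEdges (S : Finset α) : ℕ := S.card / 2

/-- The Euler characteristic `χ(M) = |V(M)| - |E(M)| + |F(M)|` of the map
`M = (S, b, w, e)`. -/
def eulerChar (S : Finset α) (b w e : Equiv.Perm α) : ℤ :=
  (numVertices S b w e : ℤ) - (numEdges S : ℤ) + (numFaces S b w : ℤ)

/-- The quantity `d(M) = 2·(number of connected components of M) - χ(M)`. -/
def dInv (S : Finset α) (b w e : Equiv.Perm α) : ℤ :=
  2 * (numComponents S b w e : ℤ) - eulerChar S b w e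

/-- The edge `{s, e s}` of the map `(b, w, e)` is a *bridge*: either one of its
extremities is a leaf (the pair belongs to `b` or to `w` as well), or its two
extremities lie in different connected components of the map with this edge removed. -/
def IsBridge (b w e : Equiv.Perm α) (s : α) : Prop :=
  (b s = e s ∨ w s = e s) ∨
    ¬ SameComponent (removeP b s (e s)) (removeP w s (e s)) (removeP e s (e s))
        (b s) (w s)

/-- The weight of the edge `{s,t}` in the map with face structure given by `(b,w)`,
as a polynomial in the variable `γ` (over `ℚ`): `1` for a straight edge, `γ` for a
twisted edge, `1/2` for an interface edge. -/
def edgeWeight (b w : Equiv.Perm α) (s t : α) : Polynomial ℚ :=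
  if IsStraight b w s t then 1
  else if IsTwisted b w s t then Polynomial.X
  else Polynomial.C (1 / 2)

/-- The weight `w_{M,≺}` of a map `(b,w,e)` equipped with a history, the latter
encoded as the list of the edges in increasing order (each edge represented by one
of its edge-sides): the product of the weights of the edges, each weight being
computed in the map in which all previous edges have already been removed. -/
def histWeight : Equiv.Perm α → Equiv.Perm α → Equiv.Perm α → List α → Polynomial ℚ
  | _, _, _, [] => 1
  | b, w, e, s :: L =>
      edgeWeight b w s (e s) *
        histWeight (removeP b s (e s)) (removeP w s (e s)) (removeP e s (e s)) L

/-- `L` encodes a *history* (a linear order on the edges) of the map with edge-side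
set `S` and edge pairing `e`: it lists every edge exactly once, each edge being
represented by its smaller edge-side. -/
def IsHistory [LinearOrder α] (S : Finset α) (e : Equiv.Perm α) (L : List α) : Prop :=
  L.Nodup ∧ (∀ s ∈ L, s ∈ S ∧ s < e s) ∧ ∀ a ∈ S, a ∈ L ∨ e a ∈ L

/-- The *measure of non-orientability* `w_M` of the map `(S,b,w,e)`: the average of
`w_{M,≺}` over all `n!` histories `≺`, as a polynomial in the variable `γ` over `ℚ`. -/
def mapWeight [LinearOrder α] (S : Finset α) (b w e : Equiv.Perm α) : Polynomial ℚ :=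
  Polynomial.C (1 / ((numEdges S).factorial : ℚ)) *
    ∑ F ∈ (Fintype.piFinset fun _ : Fin (numEdges S) => S).filter
        (fun F => IsHistory S e (List.ofFn F)),
      histWeight b w e (List.ofFn F)

/-- The number of embeddings `N_M(λ)` of the underlying bipartite graph of the map
`(S,b,w,e)` into the Young diagram whose list of row lengths is `lam`: an embedding
maps black vertices (polygons of `L(b,e)`) to rows, white vertices (polygons of
`L(w,e)`) to columns, and each edge to the box at the corresponding intersection;
it is encoded by a pair of functions on edge-sides that are constant on vertices. -/
def NMap (lam : List ℕ) (S : Finset α) (b w e : Equiv.Perm α) : ℕ :=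
  Nat.card {fp : (α → ℕ) × (α → ℕ) //
    (∀ s, s ∉ S → fp.1 s = 0 ∧ fp.2 s = 0) ∧
    (∀ s ∈ S, fp.1 (b s) = fp.1 s ∧ fp.1 (e s) = fp.1 s) ∧
    (∀ s ∈ S, fp.2 (w s) = fp.2 s ∧ fp.2 (e s) = fp.2 s) ∧
    ∀ s ∈ S, fp.2 s < lam.getD (fp.1 s) 0}

/-- The orientability generating series `\widehat{Ch}^{(α)}_π(λ)`, where the face-type
`π` is realized by the fixed couple of pairings `(b,w)` of `S`, `lam` is the list of
row lengths of the Young diagram `λ`, and `a` is the Jack parameter `α`: the sum over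
all pairings `e` of `S` (i.e., over all maps of face-type `π`) of
`(-1/√α)^{|V_•(M)|} (√α)^{|V_∘(M)|} w_M N_M(λ)`, times the sign `(-1)^{ℓ(π)}`,
where `w_M` is evaluated at `γ = (1-α)/√α`. -/
def genSeries [Fintype α] [LinearOrder α] (lam : List ℕ) (S : Finset α)
    (b w : Equiv.Perm α) (a : ℝ) : ℝ :=
  (-1 : ℝ) ^ numFaces S b w *
    ∑ e ∈ Finset.univ.filter fun e : Equiv.Perm α => IsPairing S e,
      (-1 / Real.sqrt a) ^ numFaces S b e * (Real.sqrt a) ^ numFaces S w e *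
        Polynomial.aeval ((1 - a) / Real.sqrt a) (mapWeight S b w e) *
          (NMap lam S b w e : ℝ)

/-- The number of embeddings `N_G(λ)` of the bipartite graph `G` with black vertex set
`ι`, white vertex set `κ` and edge relation `Edg` into the Young diagram whose list of
row lengths is `lam`: black vertices are mapped to rows of `λ`, white vertices to
columns of `λ`, and every edge to the box at the corresponding intersection, which
must belong to `λ`. -/
def NGraph {ι κ : Type*} (lam : List ℕ) (Edg : ι → κ → Prop) : ℕ :=
  Nat.card {fp : (ι → ℕ) × (κ → ℕ) //
    (∀ u, 0 < lam.getD (fp.1 u) 0) ∧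
    (∀ v, ∃ i, fp.2 v < lam.getD i 0) ∧
    ∀ u v, Edg u v → fp.2 v < lam.getD (fp.1 u) 0}


/-!
Write `c = w * b`. Faces are the connected components of the graph whose edges are the pairs of
`b` and of `w`; the face of `s₁` is the `c`-cycle `s₁, c s₁, …, c^(d-1) s₁` together with its
`b`-image, and the two halves are disjoint, since a fold of one onto the other would make `b` or
`w` fix an edge-side. Twistedness means `s₂ = c^m s₁` with `0 < m < d`. Removing `{s₁, s₂}` only
changes `b` and `w` inside this face, so the other faces survive. Inside it, the arc from `b s₁`
to `w s₂` and the arc from `b s₂` to `w s₁` remain paths, and the new `b`-pair `{b s₁, b s₂}`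
joins them: what is left of the face is a single face.
-/

open Function Relation Finset

theorem Relation.reflTransGen_iff_of_forall_mem {r r' : α → α → Prop} {A : Set α}
    (hA : ∀ x ∈ A, ∀ y, r x y → y ∈ A) (hr : ∀ x ∈ A, ∀ y, r x y ↔ r' x y) {s t : α}
    (hs : s ∈ A) : ReflTransGen r s t ↔ ReflTransGen r' s t := by
  suffices key : ∀ {r r' : α → α → Prop}, (∀ x ∈ A, ∀ y, r x y → y ∈ A) →
      (∀ x ∈ A, ∀ y, r x y → r' x y) → ∀ {t}, ReflTransGen r s t → ReflTransGen r' s t ∧ t ∈ A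
  from ⟨fun h => (key hA (fun x hx y => (hr x hx y).1) h).1,
    fun h => (key (fun x hx y hxy => hA x hx y ((hr x hx y).2 hxy))
      (fun x hx y => (hr x hx y).2) h).1⟩
  intro r r' hA hr t h
  induction h with
  | refl => exact ⟨.refl, hs⟩
  | tail _ hxy ih => exact ⟨ih.1.tail (hr _ ih.2 _ hxy), hA _ ih.2 _ hxy⟩

lemma Function.Involutive.perm_inv_eq {f : Perm α} (hf : Involutive f) : f⁻¹ = f :=
  (Perm.inv_def f).trans (Involutive.symm_eq_self_of_involutive f hf)

namespace MulAction

variable {G β : Type*} [Group G] [MulAction G β] {g : G} {x : β}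

lemma exists_pow_lt_period_smul_eq (hn : 0 < period g x) (i : ℤ) :
    ∃ k < period g x, g ^ k • x = g ^ i • x := by
  have := Int.emod_lt_of_pos i (Int.natCast_pos.2 hn)
  refine ⟨(i % (period g x : ℤ)).toNat, by omega, ?_⟩
  rw [← zpow_natCast, Int.toNat_of_nonneg (Int.emod_nonneg _ (by omega)), zpow_mod_period_smul]

lemma pow_smul_injOn_lt_period {k l : ℕ} (hk : k < period g x) (hl : l < period g x)
    (h : g ^ k • x = g ^ l • x) : k = l :=
  iterate_injOn_Iio_minimalPeriod hk hl (by simpa only [smul_iterate_apply] using h)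

end MulAction

section Pairing

variable {S : Finset α} {f : Perm α} {a : α}

lemma IsPairing.apply_ne (hf : IsPairing S f) (ha : a ∈ S) : f a ≠ a := (hf.2 a).2 ha

lemma IsPairing.apply_mem (hf : IsPairing S f) (ha : a ∈ S) : f a ∈ S :=
  (hf.2 (f a)).1 (by rw [hf.1]; exact (hf.apply_ne ha).symm)

end Pairing

section RemoveP

variable {f : Perm α} {s₁ s₂ t : α}

lemma removeP_apply_of_notMem (ht : t ∉ ({s₁, s₂} : Finset α))
    (hft : f t ∉ ({s₁, s₂} : Finset α)) : removeP f s₁ s₂ t = f t := by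
  simp only [mem_insert, mem_singleton, not_or] at ht hft
  simp [removeP, swap_apply_def, ht.1, ht.2, hft.1, hft.2]

lemma removeP_apply_apply_left (hf : Involutive f) (h₁ : f s₁ ≠ s₁) (h₂ : f s₂ ≠ s₂)
    (h : f s₁ ≠ s₂) (hne : s₁ ≠ s₂) : removeP f s₁ s₂ (f s₁) = f s₂ := by
  have h' : f s₂ ≠ s₁ := fun e => h (by rw [← e, hf])
  simp [removeP, swap_apply_of_ne_of_ne, hf _, hne, h₁.symm, h₂, h']

lemma removeP_involutive (hf : Involutive f) (h₁ : f s₁ ≠ s₁) (h₂ : f s₂ ≠ s₂)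
    (h : f s₁ ≠ s₂) (hne : s₁ ≠ s₂) : Involutive (removeP f s₁ s₂) := by
  have h' : f s₂ ≠ s₁ := fun e => h (by rw [← e, hf])
  have h₁₂ : f s₁ ≠ f s₂ := fun e => hne (f.injective e)
  intro t
  by_cases ht : t ∈ ({s₁, s₂, f s₁, f s₂} : Finset α)
  · simp only [mem_insert, mem_singleton] at ht
    rcases ht with rfl | rfl | rfl | rfl <;>
      simp [removeP, swap_apply_of_ne_of_ne, hf _, hne, hne.symm, h₁, h₁.symm, h₂, h₂.symm,
        h, h', h₁₂, h₁₂.symm]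
  · simp only [mem_insert, mem_singleton, not_or] at ht
    have ht' : t ∉ ({s₁, s₂} : Finset α) := by simp [ht.1, ht.2.1]
    have hft : f t ∉ ({s₁, s₂} : Finset α) := by
      simp only [mem_insert, mem_singleton, not_or]
      exact ⟨fun e => ht.2.2.1 (by rw [← e, hf]), fun e => ht.2.2.2 (by rw [← e, hf])⟩
    rw [removeP_apply_of_notMem ht' hft, removeP_apply_of_notMem hft (by rwa [hf]), hf]

end RemoveP

section Faces

variable {S : Finset α} {b w : Perm α} {s t u x : α}

lemma apply_zpow_apply_of_right (hb : Involutive b) (hw : Involutive w) (j : ℤ) (x : α) :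
    b (((w * b) ^ j) x) = ((w * b) ^ (-j)) (b x) := by
  have h : SemiconjBy b (w * b) (w * b)⁻¹ := by
    rw [SemiconjBy, mul_inv_rev, hb.perm_inv_eq, hw.perm_inv_eq, mul_assoc]
  have := congrArg (· x) (h.zpow_right j)
  rwa [inv_zpow', Perm.mul_apply, Perm.mul_apply] at this

lemma apply_zpow_apply_of_left (hb : Involutive b) (hw : Involutive w) (j : ℤ) (x : α) :
    w (((w * b) ^ j) x) = ((w * b) ^ (1 - j)) (b x) := by
  rw [sub_eq_add_neg, zpow_add, zpow_one, Perm.mul_apply, ← apply_zpow_apply_of_right hb hw,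
    Perm.mul_apply, hb]

def FaceAdj (b w : Perm α) (x y : α) : Prop := y = b x ∨ y = w x

lemma reflTransGen_faceAdj_zpow (hb : Involutive b) (hw : Involutive w) (s : α) (j : ℤ) :
    ReflTransGen (FaceAdj b w) s (((w * b) ^ j) s) := by
  induction j using Int.induction_on with
  | zero => exact .refl
  | succ n ih =>
    rw [add_comm, zpow_add, zpow_one, Perm.mul_apply, Perm.mul_apply]
    exact (ih.tail (.inl rfl)).tail (.inr rfl)
  | pred n ih =>
    have hc : (w * b) (((w * b) ^ (-(n : ℤ) - 1)) s) = ((w * b) ^ (-(n : ℤ))) s := by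
      rw [← Perm.mul_apply, ← zpow_one_add]; ring_nf
    rw [← hc, Perm.mul_apply] at ih
    refine (ih.tail (.inr rfl)).tail (.inl ?_)
    simp only [hw _, hb _]

lemma sameFace_iff_reflTransGen (hb : Involutive b) (hw : Involutive w) :
    SameFace b w s t ↔ ReflTransGen (FaceAdj b w) s t := by
  constructor
  · rintro (⟨j, rfl⟩ | ⟨j, rfl⟩)
    · exact ReflTransGen.head (.inl rfl) (reflTransGen_faceAdj_zpow hb hw (b s) j)
    · exact reflTransGen_faceAdj_zpow hb hw s j
  · intro h
    induction h with
    | refl => exact .inr ⟨0, rfl⟩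
    | tail _ hxy ih =>
      rcases ih with ⟨j, rfl⟩ | ⟨j, rfl⟩ <;> rcases hxy with rfl | rfl <;>
        simp only [Perm.mul_apply, apply_zpow_apply_of_right hb hw,
          apply_zpow_apply_of_left hb hw, hb _]
      · exact .inr ⟨-j, rfl⟩
      · exact .inr ⟨1 - j, rfl⟩
      · exact .inl ⟨-j, rfl⟩
      · exact .inl ⟨1 - j, rfl⟩

lemma faceAdj_symm (hb : Involutive b) (hw : Involutive w) (h : FaceAdj b w x u) :
    FaceAdj b w u x := by
  rcases h with rfl | rfl
  exacts [.inl (hb x).symm, .inr (hw x).symm]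

lemma sameFace_refl (b w : Perm α) (s : α) : SameFace b w s s := .inr ⟨0, rfl⟩

lemma SameFace.symm (hb : Involutive b) (hw : Involutive w) (h : SameFace b w s t) :
    SameFace b w t s := by
  rw [sameFace_iff_reflTransGen hb hw] at h ⊢
  induction h with
  | refl => exact .refl
  | tail _ hxy ih => exact ih.head (faceAdj_symm hb hw hxy)

lemma SameFace.trans (hb : Involutive b) (hw : Involutive w) (h : SameFace b w s t)
    (h' : SameFace b w t u) : SameFace b w s u := by
  rw [sameFace_iff_reflTransGen hb hw] at *
  exact h.trans h'

lemma faceOf_eq_faceOf_iff (hb : Involutive b) (hw : Involutive w) (ht : t ∈ S) :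
    faceOf S b w t = faceOf S b w s ↔ SameFace b w s t := by
  refine ⟨fun h => ?_, fun h => ?_⟩
  · have : t ∈ faceOf S b w t := mem_filter.2 ⟨ht, sameFace_refl b w t⟩
    exact (mem_filter.1 (h ▸ this)).2
  · ext u
    simp only [faceOf, mem_filter]
    exact and_congr_right fun _ => ⟨(h.trans hb hw ·), ((h.symm hb hw).trans hb hw ·)⟩

lemma IsPairing.mem_of_sameFace (hb : IsPairing S b) (hw : IsPairing S w) (hs : s ∈ S)
    (h : SameFace b w s t) : t ∈ S := by
  rw [sameFace_iff_reflTransGen hb.1 hw.1] at h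
  induction h with
  | refl => exact hs
  | tail _ hxy ih => rcases hxy with rfl | rfl; exacts [hb.apply_mem ih, hw.apply_mem ih]

end Faces

section Twisted

variable {S : Finset α} {b w : Perm α} {s s₁ s₂ t u : α}

lemma zpow_apply_ne_apply_zpow_apply (hb : IsPairing S b) (hw : IsPairing S w) (hs : s ∈ S)
    (i j : ℤ) : ((w * b) ^ i) s ≠ b (((w * b) ^ j) s) := by
  intro h
  have hmem : ∀ k : ℤ, ((w * b) ^ k) s ∈ S := fun k => hb.mem_of_sameFace hw hs (.inr ⟨k, rfl⟩)
  have hbs : b s = ((w * b) ^ (j + i)) s := by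
    rw [apply_zpow_apply_of_right hb.1 hw.1] at h
    rw [zpow_add, Perm.mul_apply, h, ← Perm.mul_apply, ← zpow_add, add_neg_cancel, zpow_zero,
      Perm.one_apply]
  -- a fold `b s = c ^ k s` of the `c`-cycle onto its `b`-image fixes its midpoint
  obtain ⟨l, hl | hl⟩ := Int.even_or_odd' (j + i)
  · apply hb.apply_ne (hmem l)
    rw [apply_zpow_apply_of_right hb.1 hw.1, hbs, ← Perm.mul_apply, ← zpow_add, hl]
    ring_nf
  · apply hw.apply_ne (hmem (l + 1))
    rw [apply_zpow_apply_of_left hb.1 hw.1, hbs, ← Perm.mul_apply, ← zpow_add, hl]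
    ring_nf

lemma apply_ne_of_oddPos (hb : IsPairing S b) (hw : IsPairing S w) (hs : s ∈ S)
    (h : OddPos b w s t) : b s ≠ t ∧ w s ≠ t := by
  obtain ⟨j, rfl⟩ := h
  have hne := zpow_apply_ne_apply_zpow_apply hb hw hs j
  refine ⟨fun h => hne 0 (by rw [zpow_zero, Perm.one_apply, h]), fun h => hne (-1) ?_⟩
  rw [← h, apply_zpow_apply_of_right hb.1 hw.1, neg_neg, zpow_one, Perm.mul_apply, hb.1]

lemma period_pos_of_isPairing (hb : IsPairing S b) (hw : IsPairing S w) (hs : s ∈ S) :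
    0 < MulAction.period (w * b) s := by
  have hS : ∀ x, (w * b) x ∈ S ↔ x ∈ S := fun x =>
    ⟨fun h => by simpa [hb.1 x, hw.1 (b x)] using hb.apply_mem (hw.apply_mem h),
      fun h => hw.apply_mem (hb.apply_mem h)⟩
  let c : Perm S := (w * b).subtypePerm hS
  refine MulAction.period_pos_of_fixed (orderOf_pos c) ?_
  have := congrArg (fun p : Perm S => (p ⟨s, hs⟩ : α)) (pow_orderOf_eq_one c)
  simp only [c, Perm.subtypePerm_pow, Perm.subtypePerm_apply, Perm.one_apply] at this
  rwa [Perm.smul_def]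

lemma exists_lt_period_of_sameFace (hb : Involutive b) (hw : Involutive w)
    (hn : 0 < MulAction.period (w * b) s) (h : SameFace b w s t) :
    ∃ k < MulAction.period (w * b) s, t = ((w * b) ^ k) s ∨ t = b (((w * b) ^ k) s) := by
  rcases h with ⟨j, rfl⟩ | ⟨j, rfl⟩
  · obtain ⟨k, hk, hkj⟩ := MulAction.exists_pow_lt_period_smul_eq hn (-j)
    refine ⟨k, hk, .inr ?_⟩
    rw [Perm.smul_def, Perm.smul_def] at hkj
    rw [hkj, apply_zpow_apply_of_right hb hw, neg_neg, Perm.mul_apply]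
  · obtain ⟨k, hk, hkj⟩ := MulAction.exists_pow_lt_period_smul_eq hn j
    exact ⟨k, hk, .inl hkj.symm⟩

end Twisted

section RemoveTwisted

variable {S : Finset α} {b w : Perm α} {s₁ s₂ t u x : α}

lemma reflTransGen_faceAdj_removeP_of_segment (hb : Involutive b) {l i : ℕ}
    (hfold : ∀ k : ℕ, b (((w * b) ^ k) x) ∉ ({s₁, s₂} : Finset α))
    (hinner : ∀ k, 0 < k → k < l → ((w * b) ^ k) x ∉ ({s₁, s₂} : Finset α)) (hi : i < l)
    (hu : u = ((w * b) ^ i) x ∨ u = b (((w * b) ^ i) x)) (hu' : u ∉ ({s₁, s₂} : Finset α)) :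
    ReflTransGen (FaceAdj (removeP b s₁ s₂) (removeP w s₁ s₂)) (b x) u := by
  have hpath : ∀ i < l,
      ReflTransGen (FaceAdj (removeP b s₁ s₂) (removeP w s₁ s₂)) (b x) (b (((w * b) ^ i) x)) := by
    intro i hi
    induction i with
    | zero => exact .refl
    | succ i ih =>
      have hc : ((w * b) ^ (i + 1)) x = w (b (((w * b) ^ i) x)) := by
        rw [pow_succ', Perm.mul_apply, Perm.mul_apply]
      have hin := hinner (i + 1) (by omega) hi
      refine ((ih (by omega)).tail (c := ((w * b) ^ (i + 1)) x) (.inr ?_)).tail (.inl ?_)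
      · rw [removeP_apply_of_notMem (hfold i) (hc ▸ hin), hc]
      · exact (removeP_apply_of_notMem hin (hfold (i + 1))).symm
  rcases hu with rfl | rfl
  · refine (hpath i hi).tail (.inl ?_)
    rw [removeP_apply_of_notMem (hfold i) (by rwa [hb]), hb]
  · exact hpath i hi

lemma reflTransGen_faceAdj_removeP_of_oddPos (hb : IsPairing S b) (hw : IsPairing S w)
    (hs₁ : s₁ ∈ S) (hne : s₁ ≠ s₂) (h₂ : OddPos b w s₁ s₂) (hu : SameFace b w s₁ u)
    (hu' : u ∉ ({s₁, s₂} : Finset α)) :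
    ReflTransGen (FaceAdj (removeP b s₁ s₂) (removeP w s₁ s₂)) (b s₁) u := by
  have hs₂ : s₂ ∈ S := hb.mem_of_sameFace hw hs₁ (.inr h₂)
  have hn := period_pos_of_isPairing hb hw hs₁
  set n := MulAction.period (w * b) s₁
  obtain ⟨j, hj⟩ := h₂
  obtain ⟨m, hm, hs₂m⟩ := MulAction.exists_pow_lt_period_smul_eq hn j
  rw [Perm.smul_def, Perm.smul_def, ← hj] at hs₂m
  have hpos : ∀ k < n, ((w * b) ^ k) s₁ ∈ ({s₁, s₂} : Finset α) → k = 0 ∨ k = m := by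
    intro k hk h
    simp only [mem_insert, mem_singleton] at h
    rcases h with h | h
    · exact .inl (MulAction.pow_smul_injOn_lt_period hk hn (by simpa [Perm.smul_def] using h))
    · exact .inr (MulAction.pow_smul_injOn_lt_period hk hm (by simpa [Perm.smul_def, hs₂m] using h))
  have hfold : ∀ k : ℕ, b (((w * b) ^ k) s₁) ∉ ({s₁, s₂} : Finset α) := by
    intro k h
    simp only [mem_insert, mem_singleton] at h
    have hne := zpow_apply_ne_apply_zpow_apply hb hw hs₁
    rcases h with h | h
    · exact hne 0 k (by simpa using h.symm)
    · exact hne m k (by simpa [hs₂m] using h.symm)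
  have hm0 : m ≠ 0 := by rintro rfl; exact hne (by simpa using hs₂m)
  obtain ⟨k, hk, hu⟩ := exists_lt_period_of_sameFace hb.1 hw.1 hn hu
  by_cases hkm : k < m
  · refine reflTransGen_faceAdj_removeP_of_segment hb.1 hfold (fun i hi0 him h => ?_) hkm hu hu'
    have := hpos i (by omega) h
    omega
  -- past `s₂` the face is traversed from `s₂` and joined to the first part by the new `b`-pair
  have hshift : ∀ i : ℕ, ((w * b) ^ i) s₂ = ((w * b) ^ (i + m)) s₁ := fun i => by
    rw [← hs₂m, ← Perm.mul_apply, ← pow_add]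
  have hbs₂ : b s₂ ≠ s₂ := hb.apply_ne hs₂
  refine ReflTransGen.head (.inl (removeP_apply_apply_left hb.1 (hb.apply_ne hs₁) hbs₂
    (apply_ne_of_oddPos hb hw hs₁ ⟨j, hj⟩).1 hne).symm) ?_
  refine reflTransGen_faceAdj_removeP_of_segment (l := n - m) (i := k - m) hb.1
    (fun i => hshift i ▸ hfold _) (fun i hi0 hin h => ?_) (by omega) ?_ hu'
  · have := hpos (i + m) (by omega) (hshift i ▸ h)
    omega
  · rwa [hshift, Nat.sub_add_cancel (by omega)]

lemma notMem_pair_of_not_sameFace {b w : Perm α} (h₂ : SameFace b w s₁ s₂)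
    (h : ¬ SameFace b w s₁ u) : u ∉ ({s₁, s₂} : Finset α) := by
  simp only [mem_insert, mem_singleton, not_or]
  exact ⟨fun e => h (e ▸ sameFace_refl b w s₁), fun e => h (e ▸ h₂)⟩

lemma sameFace_removeP_iff (hb : Involutive b) (hw : Involutive w)
    (hb' : Involutive (removeP b s₁ s₂)) (hw' : Involutive (removeP w s₁ s₂))
    (h₂ : SameFace b w s₁ s₂) (ht : ¬ SameFace b w s₁ t) :
    SameFace (removeP b s₁ s₂) (removeP w s₁ s₂) t u ↔ SameFace b w t u := by
  rw [sameFace_iff_reflTransGen hb' hw', sameFace_iff_reflTransGen hb hw]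
  have hA : ∀ x ∈ {x | ¬ SameFace b w s₁ x}, ∀ y, FaceAdj b w x y → ¬ SameFace b w s₁ y :=
    fun x hx y hxy hy => hx (hy.trans hb hw
      ((sameFace_iff_reflTransGen hb hw).2 (.single (faceAdj_symm hb hw hxy))))
  refine (Relation.reflTransGen_iff_of_forall_mem hA (fun x hx y => ?_) ht).symm
  have hbx := hA x hx (b x) (.inl rfl)
  have hwx := hA x hx (w x) (.inr rfl)
  simp only [FaceAdj, removeP_apply_of_notMem (notMem_pair_of_not_sameFace h₂ hx)
    (notMem_pair_of_not_sameFace h₂ hbx),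
    removeP_apply_of_notMem (notMem_pair_of_not_sameFace h₂ hx)
    (notMem_pair_of_not_sameFace h₂ hwx)]

lemma faceOf_removeP_of_not_sameFace (hb : Involutive b) (hw : Involutive w)
    (hb' : Involutive (removeP b s₁ s₂)) (hw' : Involutive (removeP w s₁ s₂))
    (h₂ : SameFace b w s₁ s₂) (ht : ¬ SameFace b w s₁ t) :
    faceOf (S \ {s₁, s₂}) (removeP b s₁ s₂) (removeP w s₁ s₂) t = faceOf S b w t := by
  ext u
  simp only [faceOf, mem_filter, mem_sdiff, sameFace_removeP_iff hb hw hb' hw' h₂ ht]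
  refine ⟨fun h => ⟨h.1.1, h.2⟩, fun h => ⟨⟨h.1, notMem_pair_of_not_sameFace h₂ ?_⟩, h.2⟩⟩
  exact fun hu => ht (hu.trans hb hw (h.2.symm hb hw))

lemma faceOf_removeP_of_sameFace (hb : IsPairing S b) (hw : IsPairing S w) (hs₁ : s₁ ∈ S)
    (hne : s₁ ≠ s₂) (htw : IsTwisted b w s₁ s₂)
    (hb' : Involutive (removeP b s₁ s₂)) (hw' : Involutive (removeP w s₁ s₂))
    (htS : t ∈ S \ {s₁, s₂}) (ht : SameFace b w s₁ t) :
    faceOf (S \ {s₁, s₂}) (removeP b s₁ s₂) (removeP w s₁ s₂) t =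
      faceOf S b w s₁ \ {s₁, s₂} := by
  have hconn : ∀ u, SameFace b w s₁ u → u ∉ ({s₁, s₂} : Finset α) →
      SameFace (removeP b s₁ s₂) (removeP w s₁ s₂) (b s₁) u := fun u hu hu' =>
    (sameFace_iff_reflTransGen hb' hw').2
      (reflTransGen_faceAdj_removeP_of_oddPos hb hw hs₁ hne htw.2 hu hu')
  have ht' := (mem_sdiff.1 htS).2
  ext u
  simp only [faceOf, mem_filter, mem_sdiff]
  constructor
  · rintro ⟨⟨huS, hu'⟩, htu⟩
    refine ⟨⟨huS, by_contra fun hu => hu (ht.trans hb.1 hw.1 ?_)⟩, hu'⟩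
    exact ((sameFace_removeP_iff hb.1 hw.1 hb' hw' htw.1 hu).1 (htu.symm hb' hw')).symm hb.1 hw.1
  · rintro ⟨⟨huS, hu⟩, hu'⟩
    exact ⟨⟨huS, hu'⟩, ((hconn t ht ht').symm hb' hw').trans hb' hw' (hconn u hu hu')⟩

lemma faces_sdiff_eq_of_faceOf {b' w' : Perm α} (hb : Involutive b) (hw : Involutive w)
    (h₂ : SameFace b w s₁ s₂) (hF : (faceOf S b w s₁ \ {s₁, s₂}).Nonempty)
    (hout : ∀ t ∈ S \ {s₁, s₂}, ¬ SameFace b w s₁ t →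
      faceOf (S \ {s₁, s₂}) b' w' t = faceOf S b w t)
    (hin : ∀ t ∈ S \ {s₁, s₂}, SameFace b w s₁ t →
      faceOf (S \ {s₁, s₂}) b' w' t = faceOf S b w s₁ \ {s₁, s₂}) :
    faces (S \ {s₁, s₂}) b' w' =
      (faces S b w).erase (faceOf S b w s₁) ∪ {faceOf S b w s₁ \ {s₁, s₂}} := by
  ext G
  simp only [faces, mem_union, mem_erase, mem_image, mem_singleton]
  constructor
  · rintro ⟨t, ht, rfl⟩
    by_cases hst : SameFace b w s₁ t
    · exact .inr (hin t ht hst)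
    · rw [hout t ht hst, ne_eq, faceOf_eq_faceOf_iff hb hw (mem_sdiff.1 ht).1]
      exact .inl ⟨hst, t, (mem_sdiff.1 ht).1, rfl⟩
  · rintro (⟨hG, t, htS, rfl⟩ | rfl)
    · rw [ne_eq, faceOf_eq_faceOf_iff hb hw htS] at hG
      have ht : t ∈ S \ {s₁, s₂} := mem_sdiff.2 ⟨htS, notMem_pair_of_not_sameFace h₂ hG⟩
      exact ⟨t, ht, hout t ht hG⟩
    · obtain ⟨u, hu⟩ := hF
      obtain ⟨huF, hu'⟩ := mem_sdiff.1 hu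
      have huS : u ∈ S \ {s₁, s₂} := mem_sdiff.2 ⟨(mem_filter.1 huF).1, hu'⟩
      exact ⟨u, huS, hin u huS (mem_filter.1 huF).2⟩

end RemoveTwisted

/-- twisted edge removal: let `E₀ = {s₁, s₂}` (with `s₂ = e s₁`)
be a twisted edge of the map `M = (S,b,w,e)`, whose edge-sides lie in the face `F`
of size `2r`. Then the faces of `M \ E₀` are obtained from those of `M` by
replacing `F` by a face of size `2(r-1)` (consisting of the remaining edge-sides
of `F`), all other faces being unchanged. -/
theorem faces_remove_twisted_edge (S : Finset α) (b w e : Equiv.Perm α)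
    (hb : IsPairing S b) (hw : IsPairing S w) (he : IsPairing S e)
    (s₁ s₂ : α) (hs₁ : s₁ ∈ S) (hedge : e s₁ = s₂)
    (htwisted : IsTwisted b w s₁ s₂)
    (r : ℕ) (hsize : (faceOf S b w s₁).card = 2 * r) :
    (faceOf S b w s₁ \ {s₁, s₂}).card = 2 * (r - 1) ∧
    faces (S \ {s₁, s₂}) (removeP b s₁ s₂) (removeP w s₁ s₂)
      = (faces S b w).erase (faceOf S b w s₁) ∪ {faceOf S b w s₁ \ {s₁, s₂}} := by
  have hs₂ : s₂ ∈ S := hedge ▸ he.apply_mem hs₁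
  have hne : s₁ ≠ s₂ := hedge ▸ (he.apply_ne hs₁).symm
  obtain ⟨hb₁₂, hw₁₂⟩ := apply_ne_of_oddPos hb hw hs₁ htwisted.2
  have hb' := removeP_involutive hb.1 (hb.apply_ne hs₁) (hb.apply_ne hs₂) hb₁₂ hne
  have hw' := removeP_involutive hw.1 (hw.apply_ne hs₁) (hw.apply_ne hs₂) hw₁₂ hne
  have hsub : {s₁, s₂} ⊆ faceOf S b w s₁ := insert_subset (mem_filter.2 ⟨hs₁, sameFace_refl ..⟩)
    (singleton_subset_iff.2 (mem_filter.2 ⟨hs₂, htwisted.1⟩))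
  have hbs₁ : b s₁ ∈ faceOf S b w s₁ \ {s₁, s₂} :=
    mem_sdiff.2 ⟨mem_filter.2 ⟨hb.apply_mem hs₁, .inl ⟨0, by simp⟩⟩,
      by simp [hb.apply_ne hs₁, hb₁₂]⟩
  refine ⟨by rw [card_sdiff_of_subset hsub, card_pair hne, hsize]; omega,
    faces_sdiff_eq_of_faceOf hb.1 hw.1 htwisted.1 ⟨_, hbs₁⟩
      (fun t _ ht => faceOf_removeP_of_not_sameFace hb.1 hw.1 hb' hw' htwisted.1 ht)
      (fun t ht hst => faceOf_removeP_of_sameFace hb hw hs₁ hne htwisted hb' hw' ht hst)⟩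

end
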